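/- arXiv:2304.11059 — 5 statements merged into one kernel-verified Lean document; each statement's English description precedes it below -/
import Mathlib

section
/- For any positive reals y₁, y₂, y₄, δ with y₃ ≥ 1, if m ≥ (2/y₄)·(y₂·ln(2·y₂·y₃/y₄) + ln(y₁/δ)), then y₁·exp(y₂·ln(y₃·m) − y₄·m) ≤ δ. -/
open Real

theorem Real.log_add_log_le_mul {x γ : ℝ} (hx : 0 < x) (hγ : 0 < γ) :
    log x + log γ ≤ γ * x := by
  rw [← log_mul hx.ne' hγ.ne', mul_comm x]
  linarith [log_le_sub_one_of_pos (mul_pos hγ hx)]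

/-- Take `γ = a / (2 b c)` in `log x + log γ ≤ γ x` with `x = c m`. -/
theorem Real.mul_log_mul_le {a b c m : ℝ} (ha : 0 < a) (hb : 0 < b) (hc : 0 < c) (hm : 0 < m) :
    b * log (c * m) ≤ a * m / 2 + b * log (2 * b * c / a) := by
  have hγ : 0 < a / (2 * b * c) := by positivity
  have key := log_add_log_le_mul (mul_pos hc hm) hγ
  rw [← inv_div, log_inv] at key
  have hγx : (2 * b * c / a)⁻¹ * (c * m) = a * m / (2 * b) := by field_simp
  rw [hγx] at key
  have hb_mul : b * (a * m / (2 * b)) = a * m / 2 := by field_simp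
  have := mul_le_mul_of_nonneg_left key hb.le
  rw [mul_add, hb_mul] at this
  linarith

theorem stmt3 (y₁ y₂ y₃ y₄ δ m : ℝ) (h1 : 0 < y₁) (h2 : 0 < y₂) (h3 : 1 ≤ y₃)
    (h4 : 0 < y₄) (hδ : 0 < δ) (hm : 0 < m)
    (h : m ≥ (2 / y₄) * (y₂ * Real.log (2 * y₂ * y₃ / y₄) + Real.log (y₁ / δ))) :
    y₁ * Real.exp (y₂ * Real.log (y₃ * m) - y₄ * m) ≤ δ := by
  have hlog := mul_log_mul_le h4 h2 (by linarith : 0 < y₃) hm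
  have hhalf : y₂ * log (2 * y₂ * y₃ / y₄) + log (y₁ / δ) ≤ y₄ * m / 2 := by
    rw [ge_iff_le, div_mul_eq_mul_div, div_le_iff₀ h4] at h
    linarith
  have hexp : y₂ * log (y₃ * m) - y₄ * m ≤ log (δ / y₁) := by
    rw [← inv_div, log_inv]
    linarith
  rw [mul_comm, ← le_div_iff₀ h1]
  exact (le_log_iff_exp_le (div_pos hδ h1)).1 hexp
end

section
/- Let R = {τ, 2τ, ..., ⌊1/τ⌋τ} for τ > 0, and fix γ > 0, y ∈ [0,1], and values b_r ∈ {0,1} for r ∈ R. Let ŷ = τ·Σ_{r∈R} b_r. Then |y − ŷ| < 2τ + γ + τ·|{r ∈ R : b_r ≠ ψ_{r,γ}(y) and ψ_{r,γ}(y) ≠ ⋆}|. -/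
open scoped Classical in
theorem stmt6 (τ γ y : ℝ) (hτ : 0 < τ) (hγ : 0 < γ) (hy : y ∈ Set.Icc (0:ℝ) 1)
    (b : ℝ → Bool)
    (R : Finset ℝ) (hR : R = (Finset.Icc 1 ⌊1/τ⌋₊).image (fun k : ℕ => (k : ℝ) * τ))
    (yhat : ℝ) (hyhat : yhat = τ * ((R.filter (fun r => b r = true)).card : ℝ)) :
    |y - yhat| < 2 * τ + γ + τ *
      (((R.filter (fun r => (r + γ ≤ y ∧ b r = false) ∨ (y ≤ r - γ ∧ b r = true))).card : ℝ)) := by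
  obtain ⟨hy0, hy1⟩ := hy
  have hτ' : τ ≠ 0 := hτ.ne'
  have hinj : Function.Injective (fun k : ℕ => (k:ℝ) * τ) := by
    intro a b h
    exact_mod_cast mul_right_cancel₀ hτ' h
  set N := ⌊1/τ⌋₊ with hNdef
  set E := R.filter (fun r => (r + γ ≤ y ∧ b r = false) ∨ (y ≤ r - γ ∧ b r = true)) with hE
  set A := R.filter (fun r => b r = true) with hA
  set L := R.filter (fun r => r + γ ≤ y) with hL
  set C := R.filter (fun r => ¬ (y ≤ r - γ)) with hC
  set m := ⌊(y - γ)/τ⌋₊ with hm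
  set K := ⌊(y + γ)/τ⌋₊ with hK
  -- lower bound on L.card
  have hLcard : min N m ≤ L.card := by
    have hsub : (Finset.Icc 1 (min N m)).image (fun k : ℕ => (k:ℝ) * τ) ⊆ L := by
      intro x hx
      simp only [Finset.mem_image, Finset.mem_Icc] at hx
      obtain ⟨k, ⟨hk1, hk2⟩, rfl⟩ := hx
      rw [hL, hR]
      refine Finset.mem_filter.2 ⟨Finset.mem_image.2
        ⟨k, Finset.mem_Icc.2 ⟨hk1, hk2.trans (min_le_left _ _)⟩, rfl⟩, ?_⟩
      have hkm : k ≤ m := hk2.trans (min_le_right _ _)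
      have hk0 : k ≠ 0 := by omega
      have h1 : (k:ℝ) ≤ (y - γ)/τ := (Nat.le_floor_iff' hk0).1 hkm
      have h2 : (k:ℝ) * τ ≤ y - γ := (le_div_iff₀ hτ).1 h1
      linarith
    calc min N m = (Finset.Icc 1 (min N m)).card := by simp
      _ = ((Finset.Icc 1 (min N m)).image (fun k : ℕ => (k:ℝ) * τ)).card :=
          (Finset.card_image_of_injective _ hinj).symm
      _ ≤ L.card := Finset.card_le_card hsub
  have hτmin : y - γ - τ < τ * ((min N m : ℕ) : ℝ) := by
    rcases le_total N m with h | h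
    · have hmn : min N m = N := min_eq_left h
      rw [hmn]
      have h1 : 1/τ < (N:ℝ) + 1 := Nat.lt_floor_add_one _
      have h2 : 1 < τ * ((N:ℝ) + 1) := by
        rw [div_lt_iff₀ hτ] at h1; linarith [h1]
      nlinarith
    · have hmn : min N m = m := min_eq_right h
      rw [hmn]
      have h1 : (y - γ)/τ < (m:ℝ) + 1 := Nat.lt_floor_add_one _
      have h2 : y - γ < τ * ((m:ℝ) + 1) := by
        rw [div_lt_iff₀ hτ] at h1; linarith
      linarith
  -- upper bound on C.card
  have hCcard : C.card ≤ K := by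
    have hsub : C ⊆ (Finset.Icc 1 K).image (fun k : ℕ => (k:ℝ) * τ) := by
      intro x hx
      rw [hC, hR] at hx
      obtain ⟨hxR, hxp⟩ := Finset.mem_filter.1 hx
      obtain ⟨k, hk, rfl⟩ := Finset.mem_image.1 hxR
      rw [Finset.mem_Icc] at hk
      refine Finset.mem_image.2 ⟨k, Finset.mem_Icc.2 ⟨hk.1, ?_⟩, rfl⟩
      push_neg at hxp
      have h1 : (k:ℝ) ≤ (y + γ)/τ := by
        rw [le_div_iff₀ hτ]; linarith
      exact Nat.le_floor h1
    calc C.card ≤ ((Finset.Icc 1 K).image (fun k : ℕ => (k:ℝ) * τ)).card :=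
          Finset.card_le_card hsub
      _ = K := by rw [Finset.card_image_of_injective _ hinj]; simp
  have hτK : τ * (K:ℝ) ≤ y + γ := by
    have h1 : (K:ℝ) ≤ (y + γ)/τ := Nat.floor_le (by positivity)
    rw [le_div_iff₀ hτ] at h1; linarith
  -- L.card ≤ A.card + E.card
  have hLAE : L.card ≤ A.card + E.card := by
    have hsplit : (L.filter (fun r => b r = true)).card
        + (L.filter (fun r => ¬ b r = true)).card = L.card :=
      Finset.card_filter_add_card_filter_not _
    have h1 : L.filter (fun r => b r = true) ⊆ A := by
      intro x hx
      simp only [hL, hA, Finset.mem_filter] at hx ⊢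
      exact ⟨hx.1.1, hx.2⟩
    have h2 : L.filter (fun r => ¬ b r = true) ⊆ E := by
      intro x hx
      simp only [hL, hE, Finset.mem_filter, Bool.not_eq_true] at hx ⊢
      exact ⟨hx.1.1, Or.inl ⟨hx.1.2, hx.2⟩⟩
    have := Finset.card_le_card h1
    have := Finset.card_le_card h2
    omega
  -- A.card ≤ E.card + C.card
  have hAEC : A.card ≤ E.card + C.card := by
    have hsplit : (A.filter (fun r => y ≤ r - γ)).card
        + (A.filter (fun r => ¬ y ≤ r - γ)).card = A.card :=
      Finset.card_filter_add_card_filter_not _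
    have h1 : A.filter (fun r => y ≤ r - γ) ⊆ E := by
      intro x hx
      simp only [hA, hE, Finset.mem_filter] at hx ⊢
      exact ⟨hx.1.1, Or.inr ⟨hx.2, hx.1.2⟩⟩
    have h2 : A.filter (fun r => ¬ y ≤ r - γ) ⊆ C := by
      intro x hx
      simp only [hA, hC, Finset.mem_filter] at hx ⊢
      exact ⟨hx.1.1, hx.2⟩
    have := Finset.card_le_card h1
    have := Finset.card_le_card h2
    omega
  -- conclude
  have hminR : ((min N m : ℕ) : ℝ) ≤ (L.card : ℝ) := by exact_mod_cast hLcard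
  have hCR : (C.card : ℝ) ≤ (K : ℝ) := by exact_mod_cast hCcard
  have hLAE' : (L.card : ℝ) ≤ (A.card : ℝ) + (E.card : ℝ) := by exact_mod_cast hLAE
  have hAEC' : (A.card : ℝ) ≤ (E.card : ℝ) + (C.card : ℝ) := by exact_mod_cast hAEC
  rw [abs_sub_lt_iff]
  constructor
  · -- y - yhat < ...
    have h1 : y - γ - τ < τ * (L.card : ℝ) := by
      calc y - γ - τ < τ * ((min N m : ℕ) : ℝ) := hτmin
        _ ≤ τ * (L.card : ℝ) := by
            exact mul_le_mul_of_nonneg_left hminR hτ.le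
    have h2 : τ * (L.card : ℝ) ≤ yhat + τ * (E.card : ℝ) := by
      rw [hyhat]
      nlinarith [hLAE']
    linarith
  · -- yhat - y < ...
    have h1 : yhat ≤ τ * (E.card : ℝ) + τ * (C.card : ℝ) := by
      rw [hyhat]
      nlinarith [hAEC']
    have h2 : τ * (C.card : ℝ) ≤ y + γ := by
      calc τ * (C.card : ℝ) ≤ τ * (K : ℝ) := mul_le_mul_of_nonneg_left hCR hτ.le
        _ ≤ y + γ := hτK
    nlinarith
end

section
/- For any class F of functions from X to [0,1] and any 0 < β < γ, the fat-shattering dimension satisfies fat_{Q_β(F)}(γ) ≤ fat_F(γ − β), where Q_β(F) = {x ↦ β⌊f(x)/β⌋ : f ∈ F}. -/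
/-- The fat-shattering dimension `fat_F(γ)` as an extended natural. -/
noncomputable def fatD {X : Type*} (F : Set (X → ℝ)) (γ : ℝ) : ℕ∞ :=
  sSup {n : ℕ∞ | ∃ d : ℕ, n = d ∧ ∃ x : Fin d → X, ∃ r : Fin d → ℝ,
    (∀ j, r j ∈ Set.Icc (0:ℝ) 1) ∧
    ∀ b : Fin d → Bool, ∃ f ∈ F, ∀ j,
      (b j = true → f (x j) ≥ r j + γ) ∧ (b j = false → f (x j) ≤ r j - γ)}

theorem stmt13 {X : Type*} (F : Set (X → ℝ))
    (hF : ∀ f ∈ F, ∀ x, f x ∈ Set.Icc (0:ℝ) 1)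
    (γ β : ℝ) (h0 : 0 < β) (hβγ : β < γ) :
    fatD {g | ∃ f ∈ F, g = fun x => β * (⌊f x / β⌋ : ℝ)} γ ≤ fatD F (γ - β) := by
  apply sSup_le_sSup
  rintro n ⟨d, rfl, x, r, hr, hb⟩
  refine ⟨d, rfl, x, r, hr, fun b => ?_⟩
  obtain ⟨g, ⟨f, hfF, rfl⟩, hg⟩ := hb b
  refine ⟨f, hfF, fun j => ⟨fun hbt => ?_, fun hbf => ?_⟩⟩
  · have h1 := (hg j).1 hbt
    have h2 : β * (⌊f (x j) / β⌋ : ℝ) ≤ f (x j) := by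
      have := Int.floor_le (f (x j) / β)
      calc β * (⌊f (x j) / β⌋ : ℝ) ≤ β * (f (x j) / β) := by nlinarith
        _ = f (x j) := by field_simp
    linarith
  · have h1 := (hg j).2 hbf
    have h2 : f (x j) < β * (⌊f (x j) / β⌋ : ℝ) + β := by
      have := Int.lt_floor_add_one (f (x j) / β)
      have : f (x j) / β * β < ((⌊f (x j) / β⌋ : ℝ) + 1) * β := by nlinarith
      have hfx : f (x j) / β * β = f (x j) := by field_simp
      nlinarith
    linarith
end

section
/- Let b ∈ ℕ, B = {k/b : k = 0,1,...,b} ∩ [0,1] (images of Q_{1/b} on [0,1]), m₀ ∈ ℕ, and let T ⊆ B^m be a finite pairwise ε-separated set of vectors. Fix x ∈ {1,...,m}^{m₀} and any map A from samples to functions. Then Σ_{v∈T} ℓ₁(A(sam(x,f_v)), f_v) ≥ (ε/2)·(|T| − (b+1)^{m₀}). -/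
/-! Two vectors of `T` with the same sample receive the same answer from `A`, so by the
triangle inequality their distance is at most the sum of their two errors. Since distinct vectors
of `T` are more than `ε` apart, each of the at most `(b+1)^m₀` possible samples is shared by at
most one vector with error below `ε / 2`; every other vector contributes at least `ε / 2`. -/

open Finset

lemma mul_card_sub_le_sum {ι : Type*} (T : Finset ι) (f : ι → ℝ) (hf : ∀ i ∈ T, 0 ≤ f i)
    {δ N : ℝ} (hδ : 0 ≤ δ) (hN : ((T.filter (f · < δ)).card : ℝ) ≤ N) :
    δ * (T.card - N) ≤ ∑ i ∈ T, f i := by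
  have hsplit := card_filter_add_card_filter_not (s := T) (f · < δ)
  have hlarge : ((T.filter (¬ f · < δ)).card : ℝ) * δ ≤ ∑ i ∈ T.filter (¬ f · < δ), f i := by
    simpa using card_nsmul_le_sum _ f δ fun i hi => not_lt.1 (mem_filter.1 hi).2
  have hsub : ∑ i ∈ T.filter (¬ f · < δ), f i ≤ ∑ i ∈ T, f i :=
    sum_le_sum_of_subset_of_nonneg (filter_subset _ _) fun i hi _ => hf i hi
  calc δ * (T.card - N)
      ≤ δ * (T.card - (T.filter (f · < δ)).card) := by gcongr
    _ = (T.filter (¬ f · < δ)).card * δ := by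
        rw [← hsplit, Nat.cast_add]; ring
    _ ≤ ∑ i ∈ T, f i := hlarge.trans hsub

lemma card_le_card_pow_of_injOn_comp {ι κ α : Type*} [Fintype κ] [DecidableEq κ]
    (S : Finset (ι → α)) (G : Finset α) (hS : ∀ v ∈ S, ∀ i, v i ∈ G) (x : κ → ι)
    (hinj : Set.InjOn (· ∘ x) (S : Set (ι → α))) :
    S.card ≤ G.card ^ Fintype.card κ := by
  calc S.card ≤ (Fintype.piFinset fun _ : κ => G).card :=
        card_le_card_of_injOn (· ∘ x) (fun v hv => Fintype.mem_piFinset.2 fun j => hS v hv (x j))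
          hinj
    _ = G.card ^ Fintype.card κ := by simp [Fintype.card_piFinset]

section Learning

variable {m m₀ : ℕ}

noncomputable def ell1 (f g : Fin m → ℝ) : ℝ := (1 / (m : ℝ)) * ∑ i, |f i - g i|

lemma ell1_nonneg (f g : Fin m → ℝ) : 0 ≤ ell1 f g :=
  mul_nonneg (by positivity) (sum_nonneg fun _ _ => abs_nonneg _)

lemma ell1_le_ell1_add_ell1 (a f g : Fin m → ℝ) : ell1 f g ≤ ell1 a f + ell1 a g := by
  unfold ell1
  rw [← mul_add, ← sum_add_distrib]
  gcongr with i
  calc |f i - g i| ≤ |f i - a i| + |a i - g i| := abs_sub_le _ _ _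
    _ = |a i - f i| + |a i - g i| := by rw [abs_sub_comm]

def sam (x : Fin m₀ → Fin m) (f : Fin m → ℝ) : Fin m₀ → Fin m × ℝ := fun j => (x j, f (x j))

lemma eq_of_comp_eq_of_ell1_lt {ε : ℝ} {v w : Fin m → ℝ} (hsep : v ≠ w → ε < ell1 v w)
    (A : (Fin m₀ → Fin m × ℝ) → (Fin m → ℝ)) (x : Fin m₀ → Fin m)
    (hv : ell1 (A (sam x v)) v < ε / 2) (hw : ell1 (A (sam x w)) w < ε / 2)
    (hvw : v ∘ x = w ∘ x) : v = w := by
  have hsam : sam x v = sam x w := by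
    change (fun j => (x j, (v ∘ x) j)) = fun j => (x j, (w ∘ x) j)
    rw [hvw]
  by_contra hne
  rw [hsam] at hv
  linarith [hsep hne, ell1_le_ell1_add_ell1 (A (sam x w)) v w]

lemma card_filter_ell1_lt_le {ε : ℝ} (T : Finset (Fin m → ℝ)) (G : Finset ℝ)
    (hG : ∀ v ∈ T, ∀ i, v i ∈ G) (hsep : ∀ v ∈ T, ∀ w ∈ T, v ≠ w → ε < ell1 v w)
    (A : (Fin m₀ → Fin m × ℝ) → (Fin m → ℝ)) (x : Fin m₀ → Fin m) :
    (T.filter fun v => ell1 (A (sam x v)) v < ε / 2).card ≤ G.card ^ m₀ := by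
  simpa using card_le_card_pow_of_injOn_comp _ G (fun v hv => hG v (mem_filter.1 hv).1) x
    fun v hv w hw => by
      simp only [coe_filter, Set.mem_ofPred_eq] at hv hw
      exact eq_of_comp_eq_of_ell1_lt (hsep v hv.1 w hw.1) A x hv.2 hw.2

end Learning

open scoped Classical in
theorem stmt15_general (m m₀ b : ℕ) (ε : ℝ) (hε : 0 < ε)
    (T : Finset (Fin m → ℝ))
    (hB : ∀ v ∈ T, ∀ i, ∃ k : ℕ, k ≤ b ∧ v i = (k : ℝ) / b)
    (hsep : ∀ v ∈ T, ∀ w ∈ T, v ≠ w → (1 / (m : ℝ)) * ∑ i, |v i - w i| > ε)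
    (A : (Fin m₀ → (Fin m) × ℝ) → (Fin m → ℝ)) (x : Fin m₀ → Fin m) :
    ∑ v ∈ T, (1 / (m : ℝ)) * ∑ i, |A (fun j => (x j, v (x j))) i - v i| ≥
      (ε / 2) * ((T.card : ℝ) - ((b : ℝ) + 1) ^ m₀) := by
  set G : Finset ℝ := (range (b + 1)).image fun k : ℕ => (k : ℝ) / b
  have hG : ∀ v ∈ T, ∀ i, v i ∈ G := fun v hv i => by
    obtain ⟨k, hk, hvk⟩ := hB v hv i
    exact mem_image.2 ⟨k, mem_range.2 (Nat.lt_succ_of_le hk), hvk.symm⟩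
  have hGcard : G.card ≤ b + 1 := card_image_le.trans (card_range _).le
  have hgood : ((T.filter fun v => ell1 (A (sam x v)) v < ε / 2).card : ℝ) ≤
      ((b : ℝ) + 1) ^ m₀ := by
    exact_mod_cast (card_filter_ell1_lt_le T G hG hsep A x).trans (Nat.pow_le_pow_left hGcard m₀)
  exact mul_card_sub_le_sum T (fun v => ell1 (A (sam x v)) v) (fun v _ => ell1_nonneg _ _)
    (by positivity) hgood

open scoped Classical in
theorem stmt15 (m m₀ b : ℕ) (hm : 0 < m) (hb : 0 < b) (ε : ℝ) (hε : 0 < ε)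
    (T : Finset (Fin m → ℝ))
    (hB : ∀ v ∈ T, ∀ i, ∃ k : ℕ, k ≤ b ∧ v i = (k : ℝ) / b)
    (hsep : ∀ v ∈ T, ∀ w ∈ T, v ≠ w → (1 / (m : ℝ)) * ∑ i, |v i - w i| > ε)
    (A : (Fin m₀ → (Fin m) × ℝ) → (Fin m → ℝ)) (x : Fin m₀ → Fin m) :
    ∑ v ∈ T, (1 / (m : ℝ)) * ∑ i, |A (fun j => (x j, v (x j))) i - v i| ≥
      (ε / 2) * ((T.card : ℝ) - ((b : ℝ) + 1) ^ m₀) :=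
  stmt15_general m m₀ b ε hε T hB hsep A x
end

section
/- Suppose 0 < ε < 1 and F is the class of all functions f from ℕ to [0,1] satisfying f(i) ∈ {1/2 + ε/2 + 1/(i+3), 1/2 − ε/2 − 1/(i+3)} for all i. Then for every α > 0, fat_F(ε/2 + α) is finite. -/
theorem stmt19 (ε : ℝ) (hε : 0 < ε) (hε1 : ε < 1) (α : ℝ) (hα : 0 < α)
    (F : Set (ℕ → ℝ))
    (hF : F = {f | ∀ i : ℕ, f i = 1/2 + (ε/2 + 1/((i : ℝ) + 3)) ∨
                           f i = 1/2 - (ε/2 + 1/((i : ℝ) + 3))}) :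
    ∃ D : ℕ, ∀ d : ℕ, ∀ x : Fin d → ℕ, ∀ r : Fin d → ℝ,
      (∀ j, r j ∈ Set.Icc (0:ℝ) 1) →
      (∀ b : Fin d → Bool, ∃ f ∈ F, ∀ j,
        (b j = true → f (x j) ≥ r j + (ε/2 + α)) ∧
        (b j = false → f (x j) ≤ r j - (ε/2 + α))) →
      d ≤ D := by
  refine ⟨Nat.ceil (1/α), ?_⟩
  intro d x r hr hsh
  have hγ : 0 < ε/2 + α := by positivity
  -- injectivity of x
  have hinj : Function.Injective x := by
    intro j k hjk
    by_contra hne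
    obtain ⟨f, hfF, hf⟩ := hsh (fun i => decide (i = j))
    have h1 : f (x j) ≥ r j + (ε/2 + α) := (hf j).1 (by simp)
    have h2 : f (x k) ≤ r k - (ε/2 + α) := (hf k).2 (by simp [Ne.symm, hne])
    rw [hjk] at h1
    obtain ⟨g, hgF, hg⟩ := hsh (fun i => decide (i = k))
    have h3 : g (x k) ≥ r k + (ε/2 + α) := (hg k).1 (by simp)
    have h4 : g (x j) ≤ r j - (ε/2 + α) := (hg j).2 (by simp [hne])
    rw [hjk] at h4
    linarith
  -- each x j is bounded
  have hbound : ∀ j, (x j : ℝ) + 3 ≤ 1/α := by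
    intro j
    have hpos : (0:ℝ) < (x j : ℝ) + 3 := by positivity
    have hinv : 0 ≤ 1/((x j : ℝ) + 3) := by positivity
    obtain ⟨f, hfF, hf⟩ := hsh (fun _ => true)
    have h1 : f (x j) ≥ r j + (ε/2 + α) := (hf j).1 rfl
    have hfv := (hF ▸ hfF) (x j)
    have h1' : r j + (ε/2 + α) ≤ 1/2 + (ε/2 + 1/((x j : ℝ) + 3)) := by
      rcases hfv with h | h <;> rw [h] at h1 <;> linarith
    obtain ⟨g, hgF, hg⟩ := hsh (fun _ => false)
    have h2 : g (x j) ≤ r j - (ε/2 + α) := (hg j).2 rfl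
    have hgv := (hF ▸ hgF) (x j)
    have h2' : 1/2 - (ε/2 + 1/((x j : ℝ) + 3)) ≤ r j - (ε/2 + α) := by
      rcases hgv with h | h <;> rw [h] at h2 <;> linarith
    have hα' : α ≤ 1/((x j : ℝ) + 3) := by linarith
    rw [le_div_iff₀ hpos] at hα'
    rw [le_div_iff₀ hα]
    linarith
  -- conclude
  have hmem : ∀ j, x j ∈ Finset.range (Nat.ceil (1/α)) := by
    intro j
    have := hbound j
    have : (x j : ℝ) < 1/α := by linarith
    have : (x j : ℝ) < (Nat.ceil (1/α) : ℝ) :=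
      lt_of_lt_of_le this (Nat.le_ceil _)
    exact Finset.mem_range.mpr (by exact_mod_cast this)
  calc d = (Finset.univ.image x).card := by
        rw [Finset.card_image_of_injective _ hinj, Finset.card_univ, Fintype.card_fin]
    _ ≤ (Finset.range (Nat.ceil (1/α))).card := by
        apply Finset.card_le_card
        intro a ha
        obtain ⟨j, _, rfl⟩ := Finset.mem_image.mp ha
        exact hmem j
    _ = Nat.ceil (1/α) := Finset.card_range _
end
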